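/- Let N ≥ 2, let c_1,…,c_N be positive real numbers with c = min_{1≤i≤N} c_i, and let ν_1,…,ν_N be positive integers. Then for every x ∈ ℝ^N with x_1 + ⋯ + x_N = 0 one has ∑_{i=1}^N c_i e^{−ν_i x_i} ≥ c·exp((N−1)^{-1}·‖x‖_∞). -/

import Mathlib

/-!
Let `i` be an index where `x` is smallest. Since the coordinates sum to zero, `x i ≤ 0`, and every
`x j = -∑_{k ≠ j} x k` lies between `x i` and `-(N - 1) x i`, so `‖x‖ ≤ (N - 1) (-x i)`.
The single term `c i e^{-ν i x i} ≥ c e^{-x i}` already dominates the bound.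
-/

open Finset Real

lemma norm_le_card_sub_one_mul_neg_of_sum_eq_zero {ι : Type*} [Fintype ι] [Nontrivial ι]
    {x : ι → ℝ} (hx : ∑ j, x j = 0) {i : ι} (hi : ∀ j, x i ≤ x j) :
    ‖x‖ ≤ (Fintype.card ι - 1 : ℝ) * -x i := by
  classical
  have hcard : (2 : ℝ) ≤ Fintype.card ι := by exact_mod_cast Fintype.one_lt_card
  have hxi : x i ≤ 0 := by
    have : ∑ _j : ι, x i ≤ ∑ j, x j := sum_le_sum fun j _ => hi j
    rw [sum_const, card_univ, nsmul_eq_mul, hx] at this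
    nlinarith
  refine (pi_norm_le_iff_of_nonneg (by nlinarith)).2 fun j => ?_
  have hrest : (Fintype.card ι - 1 : ℝ) * x i ≤ ∑ k ∈ univ.erase j, x k := by
    have := card_nsmul_le_sum (univ.erase j) x (x i) fun k _ => hi k
    rwa [card_erase_of_mem (mem_univ j), card_univ, nsmul_eq_mul,
      Nat.cast_sub Fintype.card_pos, Nat.cast_one] at this
  have hxj : x j = -∑ k ∈ univ.erase j, x k := by
    linarith [add_sum_erase univ x (mem_univ j)]
  rw [Real.norm_eq_abs, abs_le]
  constructor <;> nlinarith [hi j]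

lemma exists_mul_le_neg_norm_of_sum_eq_zero {ι : Type*} [Fintype ι] [Nontrivial ι]
    {x : ι → ℝ} (hx : ∑ j, x j = 0) : ∃ i, (Fintype.card ι - 1 : ℝ) * x i ≤ -‖x‖ := by
  obtain ⟨i, hi⟩ := Finite.exists_min x
  exact ⟨i, by linarith [norm_le_card_sub_one_mul_neg_of_sum_eq_zero hx hi]⟩

theorem sum_exp_lower_bound (N : ℕ) (hN : 2 ≤ N) (c : Fin N → ℝ)
    (hc : ∀ i, 0 < c i) (ν : Fin N → ℕ) (hν : ∀ i, 0 < ν i)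
    (x : Fin N → ℝ) (hx : ∑ i, x i = 0) :
    (Finset.univ.inf' ⟨⟨0, by omega⟩, Finset.mem_univ _⟩ c) *
      Real.exp (((N : ℝ) - 1)⁻¹ * ‖x‖) ≤
    ∑ i, c i * Real.exp (-(ν i : ℝ) * x i) := by
  have : Nontrivial (Fin N) := Fin.nontrivial_iff_two_le.2 hN
  obtain ⟨i, hi⟩ := exists_mul_le_neg_norm_of_sum_eq_zero hx
  rw [Fintype.card_fin] at hi
  have hN1 : (0 : ℝ) < N - 1 := by
    have : (2 : ℝ) ≤ N := by exact_mod_cast hN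
    linarith
  have hxi : x i ≤ 0 := by nlinarith [norm_nonneg x]
  have hνi : (1 : ℝ) ≤ ν i := by exact_mod_cast hν i
  have hexp : ((N : ℝ) - 1)⁻¹ * ‖x‖ ≤ -(ν i : ℝ) * x i := by
    rw [inv_mul_le_iff₀ hN1]
    nlinarith [mul_nonneg hN1.le (mul_nonneg (sub_nonneg.2 hνi) (neg_nonneg.2 hxi))]
  calc (univ.inf' _ c) * exp (((N : ℝ) - 1)⁻¹ * ‖x‖)
      ≤ c i * exp (-(ν i : ℝ) * x i) :=
        mul_le_mul (inf'_le c (mem_univ i)) (exp_le_exp.2 hexp) (exp_pos _).le (hc i).le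
    _ ≤ ∑ k, c k * exp (-(ν k : ℝ) * x k) :=
        single_le_sum (f := fun k => c k * exp (-(ν k : ℝ) * x k))
          (fun k _ => mul_nonneg (hc k).le (exp_pos _).le) (mem_univ i)
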